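/- Consider a Czech hat game on the star with center v and leaves ℓ_1, …, ℓ_n (the center and each leaf see each other; there are no other arcs), with 0 < g w < h w for every vertex w. The game is winnable if and only if there exist sets Z k i ⊆ Fin (h ℓ_i), for k ∈ Fin (h v) and i ∈ Fin n, with |Z k i| = h ℓ_i − g ℓ_i for all k and i, such that for every subset T ⊆ Fin (h v) of cardinality g v + 1, the intersection over k ∈ T of the prisms {q : ∀ i, Fin (h ℓ_i) | ∀ i, q i ∈ Z k i} is empty. -/

import Mathlib

/-!
Each leaf sees only the center, so its strategy is a function of the center's color `k`; record
it through the set `Z k i` of colors leaf `i` does *not* guess, of size `h ℓᵢ - g ℓᵢ`. For a leaf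
coloring `q`, all leaves fail exactly at the center colors `k` whose prism `∏ᵢ Z k i` contains
`q`, and the center, who sees `q`, can cover all of these with `g v` guesses iff there are at
most `g v` of them. So the game is winnable iff no point of the box lies in more than `g v` of
the prisms, i.e. iff any `g v + 1` of them have empty intersection.
-/

/-- A Czech hat game on the digraph with adjacency `D` (sage `v` sees sage `u`
iff `D v u`), guessness `g`, and hatness `h`, is winnable: there is a strategy
assigning to each sage `v` a set of `g v` guesses, depending only on the hats
she sees, such that for every coloring some sage guesses her own hat color. -/
def HatGame.Winnable {V : Type*} (D : V → V → Prop) (g h : V → ℕ) : Prop :=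
  ∃ F : ∀ v : V, (∀ u : V, Fin (h u)) → Finset (Fin (h v)),
    (∀ (v : V) (c c' : ∀ u : V, Fin (h u)),
        (∀ u : V, D v u → c u = c' u) → F v c = F v c') ∧
    (∀ (v : V) (c : ∀ u : V, Fin (h u)), (F v c).card = g v) ∧
    (∀ c : ∀ u : V, Fin (h u), ∃ v : V, c v ∈ F v c)

open Finset Fintype

theorem forall_card_filter_mem_le_iff {ι α : Type*} [Fintype ι] [DecidableEq α]
    (P : ι → Finset α) (m : ℕ) :
    (∀ q, #{k | q ∈ P k} ≤ m) ↔ ∀ T : Finset ι, #T = m + 1 → ¬∃ q, ∀ k ∈ T, q ∈ P k := by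
  constructor
  · rintro h T hT ⟨q, hq⟩
    have hsub : T ⊆ ({k | q ∈ P k} : Finset ι) := fun k hk =>
      mem_filter.2 ⟨mem_univ k, hq k hk⟩
    have := card_le_card hsub
    have := h q
    omega
  · intro h q
    by_contra! hlt
    obtain ⟨T, hTsub, hT⟩ := exists_subset_card_eq (Nat.succ_le_of_lt hlt)
    exact h T hT ⟨q, fun k hk => (mem_filter.1 (hTsub hk)).2⟩

namespace HatGame

variable {n hv gv : ℕ} {hl gl : Fin n → ℕ} {D : Option (Fin n) → Option (Fin n) → Prop}

def starColoring (k : Fin hv) (q : ∀ i, Fin (hl i)) : ∀ u : Option (Fin n), Fin (u.elim hv hl)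
  | none => k
  | some i => q i

def starStrategy (C : (∀ i, Fin (hl i)) → Finset (Fin hv))
    (L : ∀ i, Fin hv → Finset (Fin (hl i))) :
    ∀ v : Option (Fin n), (∀ u : Option (Fin n), Fin (u.elim hv hl)) → Finset (Fin (v.elim hv hl))
  | none => fun c => C fun i => c (some i)
  | some i => fun c => L i (c none)

theorem Winnable.exists_star_prisms (hv0 : 0 < hv) (hl0 : ∀ i, 0 < hl i)
    (hD_leaf : ∀ i u, D (some i) u → u = none) (hD_center : ¬D none none)
    (hwin : Winnable D (·.elim gv gl) (·.elim hv hl)) :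
    ∃ Z : Fin hv → ∀ i, Finset (Fin (hl i)),
      (∀ k i, #(Z k i) = hl i - gl i) ∧ ∀ q, #{k | q ∈ piFinset (Z k)} ≤ gv := by
  obtain ⟨F, hsee, hcard, hwin⟩ := hwin
  let k₀ : Fin hv := ⟨0, hv0⟩
  let q₀ : ∀ i, Fin (hl i) := fun i => ⟨0, hl0 i⟩
  let L : ∀ i, Fin hv → Finset (Fin (hl i)) := fun i k => F (some i) (starColoring k q₀)
  let C : (∀ i, Fin (hl i)) → Finset (Fin hv) := fun q => F none (starColoring k₀ q)
  have leaf_eq : ∀ i k q, F (some i) (starColoring k q) = L i k :=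
    fun i k q => hsee _ _ _ fun u h => by
      obtain rfl := hD_leaf i u h
      rfl
  have center_eq : ∀ k q, F none (starColoring k q) = C q :=
    fun k q => hsee _ _ _ (by rintro (_ | j) h; exacts [absurd h hD_center, rfl])
  refine ⟨fun k i => (L i k)ᶜ, fun k i => ?_, fun q => ?_⟩
  · rw [card_compl, Fintype.card_fin]
    exact congrArg (hl i - ·) (hcard (some i) _)
  · calc #{k | q ∈ piFinset fun i => (L i k)ᶜ} ≤ #(C q) := card_le_card fun k hk => ?_
      _ = gv := hcard none _
    simp only [mem_filter, mem_univ, true_and, mem_piFinset, mem_compl] at hk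
    obtain ⟨_ | i, hi⟩ := hwin (starColoring k q)
    · rwa [← center_eq k]
    · exact absurd (leaf_eq i k q ▸ hi) (hk i)

theorem winnable_star_of_prisms (hgv : gv ≤ hv) (hgl : ∀ i, gl i ≤ hl i)
    (hD_leaf : ∀ i, D (some i) none) (hD_center : ∀ i, D none (some i))
    (Z : Fin hv → ∀ i, Finset (Fin (hl i))) (hZ : ∀ k i, #(Z k i) = hl i - gl i)
    (hcov : ∀ q, #{k | q ∈ piFinset (Z k)} ≤ gv) :
    Winnable D (·.elim gv gl) (·.elim hv hl) := by
  have center_exists :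
      ∀ q, ∃ C : Finset (Fin hv), (∀ k, q ∈ piFinset (Z k) → k ∈ C) ∧ #C = gv := by
    intro q
    obtain ⟨C, hsub, hC⟩ := exists_superset_card_eq (hcov q) (by rwa [Fintype.card_fin])
    exact ⟨C, fun k hk => hsub (mem_filter.2 ⟨mem_univ k, hk⟩), hC⟩
  choose C hC_sub hC_card using center_exists
  refine ⟨starStrategy C fun i k => (Z k i)ᶜ, ?_, ?_, fun c => ?_⟩
  · rintro (_ | i) c c' h
    · exact congrArg C (funext fun i => h (some i) (hD_center i))
    · exact congrArg (fun k => (Z k i)ᶜ) (h none (hD_leaf i))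
  · rintro (_ | i) c
    · exact hC_card _
    · show #(Z (c none) i)ᶜ = gl i
      have := hZ (c none) i
      have := hgl i
      rw [card_compl, Fintype.card_fin]
      omega
  · by_cases hcenter : ∀ i, c (some i) ∈ Z (c none) i
    · exact ⟨none, hC_sub _ _ (mem_piFinset.2 hcenter)⟩
    · obtain ⟨i, hi⟩ := not_forall.1 hcenter
      exact ⟨some i, mem_compl.2 hi⟩

end HatGame

theorem czech_star_winnable_iff (n : ℕ) (hv gv : ℕ) (hl gl : Fin n → ℕ)
    (hvv : gv < hv)
    (hhl : ∀ i, gl i < hl i) :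
    HatGame.Winnable
      (fun a b : Option (Fin n) =>
        match a, b with
        | none, some _ => True
        | some _, none => True
        | _, _ => False)
      (fun a => a.elim gv gl)
      (fun a => a.elim hv hl) ↔
    ∃ Z : Fin hv → ∀ i : Fin n, Finset (Fin (hl i)),
      (∀ k i, (Z k i).card = hl i - gl i) ∧
      ∀ T : Finset (Fin hv), T.card = gv + 1 →
        ¬ ∃ q : ∀ i : Fin n, Fin (hl i), ∀ k ∈ T, ∀ i, q i ∈ Z k i := by
  have prisms_iff : ∀ Z : Fin hv → ∀ i, Finset (Fin (hl i)),
      (∀ q, #{k | q ∈ piFinset (Z k)} ≤ gv) ↔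
        ∀ T : Finset (Fin hv), #T = gv + 1 → ¬∃ q : ∀ i, Fin (hl i), ∀ k ∈ T, ∀ i, q i ∈ Z k i :=
    fun Z => by
      simpa only [Function.comp_apply, mem_piFinset] using
        forall_card_filter_mem_le_iff (piFinset ∘ Z) gv
  constructor
  · intro hwin
    obtain ⟨Z, hZ, hcov⟩ := hwin.exists_star_prisms (Nat.zero_lt_of_lt hvv)
      (fun i => Nat.zero_lt_of_lt (hhl i)) (by rintro i (_ | j) h; exacts [rfl, h.elim]) id
    exact ⟨Z, hZ, (prisms_iff Z).1 hcov⟩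
  · rintro ⟨Z, hZ, hT⟩
    exact HatGame.winnable_star_of_prisms hvv.le (fun i => (hhl i).le) (fun _ => trivial)
      (fun _ => trivial) Z hZ ((prisms_iff Z).2 hT)
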